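/- arXiv:1402.2663 — 3 statements merged into one kernel-verified Lean document; each statement's English description precedes it below -/
import Mathlib

section
/- Let G be a connected non-trivial graph and H a non-trivial graph. Let a, b ∈ V(G) be distinct vertices that are not true twins, and let x, y ∈ V(H). Then (a,x) and (b,y) are mutually maximally distant in G∘H if and only if a and b are mutually maximally distant in G. -/
open SimpleGraph

namespace Paper

variable {α β : Type*}

/-- The lexicographic product of two simple graphs. -/
def lexProd (G : SimpleGraph α) (H : SimpleGraph β) : SimpleGraph (α × β) where
  Adj p q := G.Adj p.1 q.1 ∨ (p.1 = q.1 ∧ H.Adj p.2 q.2)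
  symm := by
    constructor
    rintro ⟨a, b⟩ ⟨c, d⟩ (h | ⟨h1, h2⟩)
    · exact Or.inl h.symm
    · exact Or.inr ⟨h1.symm, h2.symm⟩
  loopless := by
    constructor
    rintro ⟨a, b⟩ (h | ⟨h1, h2⟩)
    · exact G.irrefl h
    · exact H.irrefl h2

/-- `u` is maximally distant from `v`. -/
def MaxDistant (G : SimpleGraph α) (u v : α) : Prop :=
  ∀ w, G.Adj u w → G.edist v w ≤ G.edist u v

/-- `u` and `v` are mutually maximally distant. -/
def MMD (G : SimpleGraph α) (u v : α) : Prop :=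
  MaxDistant G u v ∧ MaxDistant G v u

/-- Two vertices are true twins if they have the same closed neighborhood. -/
def TrueTwins (G : SimpleGraph α) (u v : α) : Prop :=
  ∀ w, (G.Adj u w ∨ u = w) ↔ (G.Adj v w ∨ v = w)

/-- The boundary of a graph: vertices belonging to some mutually maximally distant pair. -/
def boundary (G : SimpleGraph α) : Set α := {u | ∃ v, u ≠ v ∧ MMD G u v}

/-- The strong resolving graph of `G`, with vertex set the boundary of `G`. -/
def srGraph (G : SimpleGraph α) : SimpleGraph (boundary G) where
  Adj u v := u.1 ≠ v.1 ∧ MMD G u.1 v.1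
  symm := ⟨fun u v h => ⟨h.1.symm, h.2.2, h.2.1⟩⟩
  loopless := ⟨fun u h => h.1 rfl⟩

/-- The graph `G*`: same vertices, `u ~ v` iff `d_G(u,v) ≥ 2` or `u,v` are true twins. -/
def gstar (G : SimpleGraph α) : SimpleGraph α where
  Adj u v := u ≠ v ∧ (2 ≤ G.edist u v ∨ TrueTwins G u v)
  symm := by
    constructor
    rintro u v ⟨h1, (h2 | h2)⟩
    · exact ⟨h1.symm, Or.inl (by rwa [G.edist_comm] at h2)⟩
    · exact ⟨h1.symm, Or.inr fun w => (h2 w).symm⟩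
  loopless := ⟨fun u h => h.1 rfl⟩

/-- `G*` with its isolated vertices removed. -/
def gstarMinus (G : SimpleGraph α) : SimpleGraph {x | ∃ y, (gstar G).Adj x y} :=
  SimpleGraph.induce _ (gstar G)

/-- Disjoint union of two graphs. -/
def disjUnion (G : SimpleGraph α) (H : SimpleGraph β) : SimpleGraph (α ⊕ β) where
  Adj x y := match x, y with
    | Sum.inl a, Sum.inl b => G.Adj a b
    | Sum.inr a, Sum.inr b => H.Adj a b
    | _, _ => False
  symm := by
    constructor
    rintro (a | a) (b | b) h <;> simp_all <;> exact h.symm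
  loopless := by
    constructor
    rintro (a | a) h <;> simp_all

/-- `k` disjoint copies of a graph. -/
def copies (k : ℕ) (G : SimpleGraph α) : SimpleGraph (Fin k × α) where
  Adj p q := p.1 = q.1 ∧ G.Adj p.2 q.2
  symm := ⟨fun p q h => ⟨h.1.symm, h.2.symm⟩⟩
  loopless := ⟨fun p h => G.irrefl h.2⟩

/-- The join `K₁ + H` of a single vertex with `H`. -/
def joinK1 (H : SimpleGraph β) : SimpleGraph (Unit ⊕ β) where
  Adj x y := match x, y with
    | Sum.inl _, Sum.inl _ => False
    | Sum.inl _, Sum.inr _ => True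
    | Sum.inr _, Sum.inl _ => True
    | Sum.inr a, Sum.inr b => H.Adj a b
  symm := by
    constructor
    rintro (a | a) (b | b) h <;> simp_all <;> exact h.symm
  loopless := by
    constructor
    rintro (a | a) h <;> simp_all

/-- `w` strongly resolves the pair `u, v`. -/
def StronglyResolves (G : SimpleGraph α) (w u v : α) : Prop :=
  G.edist w u = G.edist w v + G.edist v u ∨ G.edist w v = G.edist w u + G.edist u v

/-- A strong metric generator. -/
def IsStrongGenerator (G : SimpleGraph α) (S : Finset α) : Prop :=
  ∀ u v : α, u ≠ v → ∃ w ∈ S, StronglyResolves G w u v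

/-- The strong metric dimension. -/
noncomputable def sdim (G : SimpleGraph α) : ℕ :=
  sInf {k | ∃ S : Finset α, IsStrongGenerator G S ∧ S.card = k}

/-- A vertex cover. -/
def IsVertexCover (G : SimpleGraph α) (S : Finset α) : Prop :=
  ∀ ⦃u v : α⦄, G.Adj u v → u ∈ S ∨ v ∈ S

/-- The vertex cover number `α(G)`. -/
noncomputable def vcNum (G : SimpleGraph α) : ℕ :=
  sInf {k | ∃ S : Finset α, IsVertexCover G S ∧ S.card = k}

/-- The independence number `β(G)`. -/
noncomputable def indepNum (G : SimpleGraph α) : ℕ :=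
  sSup {k | ∃ S : Finset α, (∀ u ∈ S, ∀ v ∈ S, ¬ G.Adj u v) ∧ S.card = k}

/-! Between different `G`-coordinates, distances in `G ∘ H` are the distances in `G`: a walk
projects to a `G`-walk that is no longer, and a `G`-walk lifts to a walk of the same length that
may change the `H`-coordinate on its first step. In particular, when `d(a, b) ≥ 2` the fibre
`{b} × V(H)` has diameter at most `2 ≤ d(a, b)`, so moving inside it never takes `(b, y)` further
from `(a, x)`; and `d(a, b) ≥ 2` is exactly what excluding true twins buys, since an adjacent
mutually maximally distant pair has equal closed neighbourhoods. -/

section LexProd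

variable {G : SimpleGraph α} {H : SimpleGraph β}

lemma edist_fst_le_one_of_lexProd_adj {p q : α × β} (h : (lexProd G H).Adj p q) :
    G.edist p.1 q.1 ≤ 1 := by
  rcases h with h | ⟨h, -⟩
  · exact edist_le_one_iff_adj_or_eq.mpr (Or.inl h)
  · simp [h]

lemma edist_fst_le_length {p q : α × β} (w : (lexProd G H).Walk p q) :
    G.edist p.1 q.1 ≤ w.length := by
  induction w with
  | nil => simp
  | @cons u r v h w ih =>
    calc G.edist u.1 v.1 ≤ G.edist u.1 r.1 + G.edist r.1 v.1 := G.edist_triangle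
      _ ≤ 1 + (w.length : ℕ∞) := add_le_add (edist_fst_le_one_of_lexProd_adj h) ih
      _ = (w.cons h).length := by rw [Walk.length_cons]; push_cast; ring

lemma edist_fst_le_edist_lexProd (p q : α × β) :
    G.edist p.1 q.1 ≤ (lexProd G H).edist p q := by
  rcases eq_or_ne ((lexProd G H).edist p q) ⊤ with h | h
  · simp [h]
  · obtain ⟨w, hw⟩ := exists_walk_of_edist_ne_top h
    exact hw ▸ edist_fst_le_length w

variable (G H) in
@[simps]
def lexProdSection (y : β) : G →g lexProd G H where
  toFun v := (v, y)
  map_rel' h := Or.inl h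

lemma edist_lexProd_of_ne {a b : α} (hab : a ≠ b) (x y : β) :
    (lexProd G H).edist (a, x) (b, y) = G.edist a b := by
  refine le_antisymm ?_ (edist_fst_le_edist_lexProd (a, x) (b, y))
  rcases eq_or_ne (G.edist a b) ⊤ with h | h
  · simp [h]
  obtain ⟨p, hp⟩ := exists_walk_of_edist_ne_top h
  cases p with
  | nil => exact absurd rfl hab
  | @cons _ c _ hac q =>
    have hac' : (lexProd G H).Adj (a, x) (lexProdSection G H y c) := Or.inl hac
    simpa [← hp] using edist_le (.cons hac' (q.map (lexProdSection G H y)))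

lemma edist_lexProd_fiber_le_two {b c : α} (hbc : G.Adj b c) (y z : β) :
    (lexProd G H).edist (b, y) (b, z) ≤ 2 := by
  have hout : (lexProd G H).Adj (b, y) (c, z) := Or.inl hbc
  have hback : (lexProd G H).Adj (c, z) (b, z) := Or.inl hbc.symm
  simpa using edist_le (hout.toWalk.concat hback)

lemma edist_lexProd_fiber_le {a b : α} (hab : a ≠ b) (h2 : 2 ≤ G.edist a b) (y z : β) :
    (lexProd G H).edist (b, y) (b, z) ≤ G.edist a b := by
  rcases eq_or_ne (G.edist a b) ⊤ with h | h
  · simp [h]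
  obtain ⟨p, -⟩ := exists_walk_of_edist_ne_top (edist_comm.trans_ne h)
  have hnil : ¬ p.Nil := Walk.not_nil_of_ne hab.symm
  exact (edist_lexProd_fiber_le_two (p.adj_snd hnil) y z).trans h2

lemma maxDistant_of_maxDistant_lexProd {a b : α} (hab : a ≠ b) {x y : β}
    (h : MaxDistant (lexProd G H) (a, x) (b, y)) : MaxDistant G a b := by
  intro w haw
  rcases eq_or_ne w b with rfl | hwb
  · simp
  · simpa [edist_lexProd_of_ne hab, edist_lexProd_of_ne hwb.symm] using h (w, y) (Or.inl haw)

lemma maxDistant_lexProd_of_maxDistant {a b : α} (hab : a ≠ b) (h2 : 2 ≤ G.edist a b)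
    (x y : β) (h : MaxDistant G a b) : MaxDistant (lexProd G H) (a, x) (b, y) := by
  rw [MaxDistant, edist_lexProd_of_ne hab]
  rintro ⟨w, z⟩ (haw | ⟨rfl, -⟩)
  · rcases eq_or_ne w b with rfl | hwb
    · exact edist_lexProd_fiber_le hab h2 y z
    · rw [edist_lexProd_of_ne hwb.symm]
      exact h w haw
  · rw [edist_lexProd_of_ne hab.symm, edist_comm]

end LexProd

lemma MaxDistant.adj_or_eq {G : SimpleGraph α} {u v w : α} (h : MaxDistant G u v)
    (huv : G.Adj u v) (huw : G.Adj u w) : G.Adj v w ∨ v = w := by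
  have := h w huw
  rwa [edist_eq_one_iff_adj.mpr huv, edist_le_one_iff_adj_or_eq] at this

lemma MMD.trueTwins_of_adj {G : SimpleGraph α} {a b : α} (h : MMD G a b) (hab : G.Adj a b) :
    TrueTwins G a b := by
  intro w
  constructor
  · rintro (haw | rfl)
    · exact h.1.adj_or_eq hab haw
    · exact Or.inl hab.symm
  · rintro (hbw | rfl)
    · exact h.2.adj_or_eq hab.symm hbw
    · exact Or.inl hab

lemma MMD.two_le_edist {G : SimpleGraph α} {a b : α} (h : MMD G a b) (hab : a ≠ b)
    (htw : ¬ TrueTwins G a b) : 2 ≤ G.edist a b := by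
  have hfar : ¬ G.edist a b ≤ 1 := by
    rw [edist_le_one_iff_adj_or_eq]
    rintro (hadj | rfl)
    exacts [htw (h.trueTwins_of_adj hadj), hab rfl]
  exact Order.add_one_le_of_lt (not_le.mp hfar)

theorem stmt_3_general (G : SimpleGraph α) (H : SimpleGraph β) (a b : α) (hab : a ≠ b)
    (htw : ¬ TrueTwins G a b) (x y : β) :
    MMD (lexProd G H) (a, x) (b, y) ↔ MMD G a b := by
  constructor
  · rintro ⟨hlex, hlex'⟩
    exact ⟨maxDistant_of_maxDistant_lexProd hab hlex,
      maxDistant_of_maxDistant_lexProd hab.symm hlex'⟩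
  · intro h
    have h2 := h.two_le_edist hab htw
    exact ⟨maxDistant_lexProd_of_maxDistant hab h2 x y h.1,
      maxDistant_lexProd_of_maxDistant hab.symm (edist_comm ▸ h2) y x h.2⟩

theorem stmt_3 (G : SimpleGraph α) (H : SimpleGraph β) (hG : G.Connected)
    (hGn : Nontrivial α) (hHn : Nontrivial β) (a b : α) (hab : a ≠ b)
    (htw : ¬ TrueTwins G a b) (x y : β) :
    MMD (lexProd G H) (a, x) (b, y) ↔ MMD G a b :=
  stmt_3_general G H a b hab htw x y

end Paper
end

section
/- Let G be a connected non-trivial graph, H a graph of order n' ≥ 2, and let a, b ∈ V(G) be two distinct true twin vertices of G, and x, y ∈ V(H). Then (a,x) and (b,y) are mutually maximally distant in G∘H if and only if both x and y have degree n'−1 in H. -/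
/-!
True twins `a ≠ b` are adjacent, so `(a, x)` and `(b, y)` are adjacent in `G ∘ H`. For adjacent
`u, v`, `u` is maximally distant from `v` exactly when `N[u] ⊆ N[v]`. In `G ∘ H` the closed
neighbourhood of `(a, x)` contains the whole fibre `{b} × V(H)`, which lies in `N[(b, y)]` iff `y`
is universal in `H`; every other neighbour of `(a, x)` is a neighbour of `(b, y)` because `a` and
`b` are twins.
-/

open SimpleGraph

namespace Paper

variable {α β : Type*}

lemma TrueTwins.symm {G : SimpleGraph α} {u v : α} (h : TrueTwins G u v) : TrueTwins G v u :=
  fun w => (h w).symm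

lemma TrueTwins.adj {G : SimpleGraph α} {u v : α} (h : TrueTwins G u v) (hne : u ≠ v) :
    G.Adj u v :=
  ((h v).2 (Or.inr rfl)).resolve_right hne

lemma TrueTwins.adj_of_adj {G : SimpleGraph α} {u v w : α} (h : TrueTwins G u v)
    (huw : G.Adj u w) (hvw : v ≠ w) : G.Adj v w :=
  ((h w).1 (Or.inl huw)).resolve_right hvw

lemma maxDistant_iff_of_adj {G : SimpleGraph α} {u v : α} (huv : G.Adj u v) :
    MaxDistant G u v ↔ ∀ w, G.Adj u w → G.Adj v w ∨ v = w := by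
  simp only [MaxDistant, edist_eq_one_iff_adj.mpr huv, edist_le_one_iff_adj_or_eq]

lemma forall_lexProd_adj_imp_adj_or_eq_iff {G : SimpleGraph α} {H : SimpleGraph β} {a b : α}
    (htw : TrueTwins G a b) (hab : a ≠ b) (x y : β) :
    (∀ w, (lexProd G H).Adj (a, x) w → (lexProd G H).Adj (b, y) w ∨ (b, y) = w) ↔
      H.IsUniversal y := by
  have hGab : G.Adj a b := htw.adj hab
  constructor
  · intro h d hyd
    rcases h (b, d) (Or.inl hGab) with (hG | ⟨-, hH⟩) | heq
    · exact absurd hG G.irrefl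
    · exact hH
    · exact absurd (congrArg Prod.snd heq) hyd
  · rintro hy ⟨c, d⟩ (hac | ⟨rfl, -⟩)
    · by_cases hbc : b = c
      · subst hbc
        by_cases hyd : y = d
        · exact Or.inr (by rw [hyd])
        · exact Or.inl (Or.inr ⟨rfl, hy hyd⟩)
      · exact Or.inl (Or.inl (htw.adj_of_adj hac hbc))
    · exact Or.inl (Or.inl hGab.symm)

lemma maxDistant_lexProd_iff {G : SimpleGraph α} {H : SimpleGraph β} {a b : α}
    (htw : TrueTwins G a b) (hab : a ≠ b) (x y : β) :
    MaxDistant (lexProd G H) (a, x) (b, y) ↔ H.IsUniversal y :=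
  (maxDistant_iff_of_adj (Or.inl (htw.adj hab))).trans
    (forall_lexProd_adj_imp_adj_or_eq_iff htw hab x y)

theorem stmt_4_general [Fintype β] (G : SimpleGraph α) (H : SimpleGraph β) [DecidableRel H.Adj]
    (a b : α) (hab : a ≠ b) (htw : TrueTwins G a b) (x y : β) :
    MMD (lexProd G H) (a, x) (b, y) ↔
      (H.degree x = Fintype.card β - 1 ∧ H.degree y = Fintype.card β - 1) := by
  rw [MMD, maxDistant_lexProd_iff htw hab, maxDistant_lexProd_iff htw.symm (Ne.symm hab),
    degree_eq_card_sub_one, degree_eq_card_sub_one]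
  exact and_comm

theorem stmt_4 [Fintype β] (G : SimpleGraph α) (H : SimpleGraph β) [DecidableRel H.Adj]
    (hG : G.Connected) (hGn : Nontrivial α) (hn' : 2 ≤ Fintype.card β)
    (a b : α) (hab : a ≠ b) (htw : TrueTwins G a b) (x y : β) :
    MMD (lexProd G H) (a, x) (b, y) ↔
      (H.degree x = Fintype.card β - 1 ∧ H.degree y = Fintype.card β - 1) :=
  stmt_4_general G H a b hab htw x y

end Paper
end

section
/- Let n ≥ 2 and let H be a graph of order n' ≥ 2 with maximum degree Δ(H) ≤ n'−2. Then the strong resolving graph of K_n∘H is isomorphic to n disjoint copies of H*; consequently dim_s(K_n∘H) = n·dim_s(H) if D(H) = 2, and dim_s(K_n∘H) = n·dim_s(K₁+H) if D(H) > 2. -/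
/-!
Both `K_n ∘ H` (for `n ≥ 2`) and `K₁ + H` have diameter at most 2. In a graph of diameter at most
2, distinct vertices are mutually maximally distant iff they are non-adjacent or true twins, i.e.
iff they are adjacent in `G*`; and a vertex outside `{u, v}` strongly resolves `u, v` only if `u, v`
are adjacent and it sees exactly one of them. Hence the strong metric generators are exactly the
vertex covers of `G*`, and `dim_s G` is the vertex cover number `α(G*)`.

Since every vertex of `H` has a non-neighbour, vertices of different copies of `H` in `K_n ∘ H` are
never twins, so `(K_n ∘ H)* = n H*`, every vertex lies in the boundary, and
`dim_s (K_n ∘ H) = n α(H*)`. Finally `(K₁ + H)*` is `H*` plus an isolated apex, so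
`α((K₁ + H)*) = α(H*)`, while `dim_s H = α(H*)` directly when `D(H) = 2`.
-/

open SimpleGraph

namespace Paper

variable {α β : Type*}

section DiameterTwo

variable {G : SimpleGraph α} {u v w : α}

lemma two_le_edist_iff : 2 ≤ G.edist u v ↔ u ≠ v ∧ ¬ G.Adj u v := by
  rw [← one_add_one_eq_two, ENat.add_one_le_iff ENat.one_ne_top, ← not_le,
    edist_le_one_iff_adj_or_eq]
  tauto

lemma compl_le_gstar : Gᶜ ≤ gstar G :=
  fun _ _ ⟨huv, hnadj⟩ => ⟨huv, .inl (two_le_edist_iff.mpr ⟨huv, hnadj⟩)⟩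

lemma edist_le_two_of_adj_of_adj (huw : G.Adj u w) (hwv : G.Adj w v) : G.edist u v ≤ 2 := by
  simpa using (Walk.cons huw (Walk.cons hwv Walk.nil)).edist_le

open Classical in
lemma edist_eq_ite_of_ediam_le_two (h : G.ediam ≤ 2) (huv : u ≠ v) :
    G.edist u v = if G.Adj u v then 1 else 2 := by
  split_ifs with hadj
  · exact edist_eq_one_iff_adj.mpr hadj
  · exact le_antisymm (edist_le_ediam.trans h) (two_le_edist_iff.mpr ⟨huv, hadj⟩)

lemma maxDistant_iff_of_ediam_le_two (h : G.ediam ≤ 2) (huv : u ≠ v) :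
    MaxDistant G u v ↔ (G.Adj u v → ∀ w, G.Adj u w → G.Adj v w ∨ v = w) := by
  simp only [MaxDistant, edist_eq_ite_of_ediam_le_two h huv]
  by_cases hadj : G.Adj u v
  · simp [hadj, edist_le_one_iff_adj_or_eq]
  · simpa [hadj] using fun _ _ => edist_le_ediam.trans h

lemma trueTwins_iff_of_adj (hadj : G.Adj u v) :
    TrueTwins G u v ↔
      (∀ w, G.Adj u w → G.Adj v w ∨ v = w) ∧ ∀ w, G.Adj v w → G.Adj u w ∨ u = w := by
  refine ⟨fun h => ⟨fun w hw => (h w).mp (.inl hw), fun w hw => (h w).mpr (.inl hw)⟩, ?_⟩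
  rintro ⟨huv, hvu⟩ w
  constructor
  · rintro (hw | rfl)
    exacts [huv w hw, .inl hadj.symm]
  · rintro (hw | rfl)
    exacts [hvu w hw, .inl hadj]

lemma mmd_iff_gstar_adj (h : G.ediam ≤ 2) (huv : u ≠ v) : MMD G u v ↔ (gstar G).Adj u v := by
  rw [MMD, maxDistant_iff_of_ediam_le_two h huv, maxDistant_iff_of_ediam_le_two h huv.symm]
  change _ ↔ u ≠ v ∧ (2 ≤ G.edist u v ∨ TrueTwins G u v)
  by_cases hadj : G.Adj u v
  · simp [hadj, hadj.symm, huv, two_le_edist_iff, trueTwins_iff_of_adj hadj]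
  · simp [hadj, G.adj_comm, huv, two_le_edist_iff]

lemma stronglyResolves_comm : StronglyResolves G w u v ↔ StronglyResolves G w v u :=
  or_comm

lemma stronglyResolves_self_left (u v : α) : StronglyResolves G u u v :=
  .inr (by rw [edist_self, zero_add])

lemma stronglyResolves_self_right (u v : α) : StronglyResolves G v u v :=
  stronglyResolves_comm.mpr (stronglyResolves_self_left v u)

lemma stronglyResolves_iff_of_ediam_le_two (h : G.ediam ≤ 2) (huv : u ≠ v) (hwu : w ≠ u)
    (hwv : w ≠ v) :
    StronglyResolves G w u v ↔ G.Adj u v ∧ (G.Adj w u ↔ ¬ G.Adj w v) := by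
  rw [StronglyResolves, edist_comm (u := v), edist_eq_ite_of_ediam_le_two h huv,
    edist_eq_ite_of_ediam_le_two h hwu, edist_eq_ite_of_ediam_le_two h hwv]
  by_cases huv' : G.Adj u v <;> by_cases hwu' : G.Adj w u <;> by_cases hwv' : G.Adj w v <;>
    norm_num [huv', hwu', hwv']

lemma exists_stronglyResolves_of_isVertexCover_gstar (h : G.ediam ≤ 2) {S : Finset α}
    (hS : IsVertexCover (gstar G) S) (hadj : G.Adj u v) (hwu : G.Adj w u) (hwv : w ≠ v)
    (hnwv : ¬ G.Adj w v) : ∃ x ∈ S, StronglyResolves G x u v := by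
  rcases hS (compl_le_gstar ⟨hwv, hnwv⟩) with hw | hv
  · refine ⟨w, hw, (stronglyResolves_iff_of_ediam_le_two h hadj.ne hwu.ne hwv).mpr ?_⟩
    exact ⟨hadj, iff_of_true hwu hnwv⟩
  · exact ⟨v, hv, stronglyResolves_self_right u v⟩

lemma isStrongGenerator_iff_isVertexCover_gstar (h : G.ediam ≤ 2) {S : Finset α} :
    IsStrongGenerator G S ↔ IsVertexCover (gstar G) S := by
  constructor
  · rintro hS u v ⟨huv, hfar⟩
    obtain ⟨w, hwS, hres⟩ := hS u v huv
    by_contra! hmem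
    have hwu : w ≠ u := by rintro rfl; exact hmem.1 hwS
    have hwv : w ≠ v := by rintro rfl; exact hmem.2 hwS
    obtain ⟨hadj, hsep⟩ := (stronglyResolves_iff_of_ediam_le_two h huv hwu hwv).mp hres
    rcases hfar with hfar | htwins
    · exact (two_le_edist_iff.mp hfar).2 hadj
    · have := htwins w
      simp only [hwu.symm, hwv.symm, or_false, G.adj_comm u, G.adj_comm v] at this
      tauto
  · intro hS u v huv
    by_cases hfar : (gstar G).Adj u v
    · rcases hS hfar with hu | hv
      exacts [⟨u, hu, stronglyResolves_self_left u v⟩, ⟨v, hv, stronglyResolves_self_right u v⟩]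
    have hadj : G.Adj u v := by
      by_contra hnadj
      exact hfar (compl_le_gstar ⟨huv, hnadj⟩)
    have hsep : ¬ TrueTwins G u v := fun htwins => hfar ⟨huv, .inr htwins⟩
    obtain ⟨w, hw⟩ := not_forall.mp hsep
    by_cases hwu : G.Adj w u
    · have hwv : ¬ (G.Adj w v ∨ w = v) := by grind [G.adj_comm]
      exact exists_stronglyResolves_of_isVertexCover_gstar h hS hadj hwu (by tauto) (by tauto)
    · have hwv : G.Adj w v ∧ w ≠ u := by grind [G.adj_comm]
      obtain ⟨x, hx, hres⟩ :=
        exists_stronglyResolves_of_isVertexCover_gstar h hS hadj.symm hwv.1 hwv.2 hwu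
      exact ⟨x, hx, stronglyResolves_comm.mp hres⟩

lemma sdim_eq_vcNum_gstar (h : G.ediam ≤ 2) : sdim G = vcNum (gstar G) := by
  simp only [sdim, vcNum, isStrongGenerator_iff_isVertexCover_gstar h]

def srGraphIsoGstar (h : G.ediam ≤ 2) (hG : ∀ u, ∃ v, Gᶜ.Adj u v) : srGraph G ≃g gstar G where
  toEquiv := Equiv.subtypeUnivEquiv fun u => by
    obtain ⟨v, huv⟩ := hG u
    exact show ∃ v, u ≠ v ∧ MMD G u v from
      ⟨v, huv.ne, (mmd_iff_gstar_adj h huv.ne).mpr (compl_le_gstar huv)⟩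
  map_rel_iff' {u v} := by
    change (gstar G).Adj u.1 v.1 ↔ u.1 ≠ v.1 ∧ MMD G u.1 v.1
    exact ⟨fun huv => ⟨huv.ne, (mmd_iff_gstar_adj h huv.ne).mpr huv⟩,
      fun ⟨huv, hmmd⟩ => (mmd_iff_gstar_adj h huv).mp hmmd⟩

end DiameterTwo

section VertexCover

variable {G : SimpleGraph α}

lemma vcNum_le {S : Finset α} (hS : IsVertexCover G S) : vcNum G ≤ S.card :=
  Nat.sInf_le ⟨S, hS, rfl⟩

lemma exists_isVertexCover_card_eq_vcNum [Fintype α] (G : SimpleGraph α) :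
    ∃ S : Finset α, IsVertexCover G S ∧ S.card = vcNum G :=
  Nat.sInf_mem (s := {k | ∃ S : Finset α, IsVertexCover G S ∧ S.card = k})
    ⟨_, Finset.univ, fun u _ _ => .inl (Finset.mem_univ u), rfl⟩

lemma vcNum_copies [Fintype α] (n : ℕ) (G : SimpleGraph α) :
    vcNum (copies n G) = n * vcNum G := by
  classical
  apply le_antisymm
  · obtain ⟨S, hS, hcard⟩ := exists_isVertexCover_card_eq_vcNum G
    have hcover : IsVertexCover (copies n G) (Finset.univ ×ˢ S) := by
      rintro p q ⟨-, hpq⟩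
      simpa using hS hpq
    simpa [hcard] using vcNum_le hcover
  · obtain ⟨T, hT, hcard⟩ := exists_isVertexCover_card_eq_vcNum (copies n G)
    have hfiber (i : Fin n) : vcNum G ≤ (T.filter (·.1 = i)).card := by
      have hcover : IsVertexCover G ((T.filter (·.1 = i)).image Prod.snd) := by
        intro u v huv
        have := hT (show (copies n G).Adj (i, u) (i, v) from ⟨rfl, huv⟩)
        simp only [Finset.mem_image, Finset.mem_filter, Prod.exists]
        grind
      exact (vcNum_le hcover).trans Finset.card_image_le
    calc n * vcNum G = ∑ _i : Fin n, vcNum G := by simp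
      _ ≤ ∑ i : Fin n, (T.filter (·.1 = i)).card := Finset.sum_le_sum fun i _ => hfiber i
      _ = vcNum (copies n G) := by
        rw [← hcard, Finset.card_eq_sum_card_fiberwise fun p _ => Finset.mem_univ p.1]

lemma vcNum_eq_of_adj_mem_range [Fintype α] [Fintype β] {G' : SimpleGraph β} (f : G ↪g G')
    (hf : ∀ x y, G'.Adj x y → x ∈ Set.range f) : vcNum G' = vcNum G := by
  classical
  apply le_antisymm
  · obtain ⟨S, hS, hcard⟩ := exists_isVertexCover_card_eq_vcNum G
    have hcover : IsVertexCover G' (S.map f.toEmbedding) := by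
      intro x y hxy
      obtain ⟨a, rfl⟩ := hf x y hxy
      obtain ⟨b, rfl⟩ := hf y _ hxy.symm
      simpa using hS (f.map_adj_iff.mp hxy)
    simpa [hcard] using vcNum_le hcover
  · obtain ⟨T, hT, hcard⟩ := exists_isVertexCover_card_eq_vcNum G'
    have hcover : IsVertexCover G (T.preimage f f.injective.injOn) := by
      intro a b hab
      simpa using hT (f.map_adj_iff.mpr hab)
    calc vcNum G ≤ (T.preimage f f.injective.injOn).card := vcNum_le hcover
      _ ≤ T.card := Finset.card_le_card_of_injOn f (fun a ha => Finset.mem_preimage.mp ha)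
          f.injective.injOn
      _ = vcNum G' := hcard

end VertexCover

lemma exists_compl_adj_of_degree_le [Fintype β] {H : SimpleGraph β} [DecidableRel H.Adj]
    (hcard : 2 ≤ Fintype.card β) (hdeg : ∀ v, H.degree v ≤ Fintype.card β - 2) (v : β) :
    ∃ w, Hᶜ.Adj v w := by
  classical
  rw [← degree_pos_iff_exists_adj, degree_compl]
  have := hdeg v
  omega

section LexProdTop

variable {H : SimpleGraph β} {p q : α × β}

lemma lexProd_top_adj :
    (lexProd (⊤ : SimpleGraph α) H).Adj p q ↔ p.1 ≠ q.1 ∨ p.1 = q.1 ∧ H.Adj p.2 q.2 :=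
  .rfl

lemma ediam_lexProd_top_le_two [Nontrivial α] [Nonempty β] :
    (lexProd (⊤ : SimpleGraph α) H).ediam ≤ 2 := by
  refine ediam_le_iff.mpr fun p q => ?_
  by_cases hpq : p.1 = q.1
  · obtain ⟨i, hi⟩ := exists_ne p.1
    obtain ⟨b⟩ := ‹Nonempty β›
    exact edist_le_two_of_adj_of_adj (w := (i, b)) (lexProd_top_adj.mpr (.inl hi.symm))
      (lexProd_top_adj.mpr (.inl (hpq ▸ hi)))
  · rw [edist_eq_one_iff_adj.mpr (lexProd_top_adj.mpr (.inl hpq))]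
    norm_num

lemma trueTwins_lexProd_top_iff {i : α} {u v : β} :
    TrueTwins (lexProd (⊤ : SimpleGraph α) H) (i, u) (i, v) ↔ TrueTwins H u v := by
  refine ⟨fun h w => by simpa [lexProd_top_adj] using h (i, w), fun h ⟨j, w⟩ => ?_⟩
  by_cases hij : i = j
  · subst hij
    simpa [lexProd_top_adj] using h w
  · exact iff_of_true (.inl (.inl hij)) (.inl (.inl hij))

lemma not_trueTwins_lexProd_top (hH : ∀ v, ∃ w, Hᶜ.Adj v w) (hpq : p.1 ≠ q.1) :
    ¬ TrueTwins (lexProd (⊤ : SimpleGraph α) H) p q := by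
  intro h
  obtain ⟨w, hvw, hnadj⟩ := hH q.2
  rcases (h (q.1, w)).mp (.inl (.inl hpq)) with (hadj | ⟨-, hadj⟩) | heq
  · exact hadj rfl
  · exact hnadj hadj
  · exact hvw (congrArg Prod.snd heq)

lemma exists_compl_adj_lexProd_top (hH : ∀ v, ∃ w, Hᶜ.Adj v w) (p : α × β) :
    ∃ q, (lexProd (⊤ : SimpleGraph α) H)ᶜ.Adj p q := by
  obtain ⟨w, hvw, hnadj⟩ := hH p.2
  refine ⟨(p.1, w), fun h => hvw (congrArg Prod.snd h), ?_⟩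
  simpa [lexProd_top_adj] using hnadj

lemma gstar_lexProd_top {n : ℕ} (hH : ∀ v, ∃ w, Hᶜ.Adj v w) :
    gstar (lexProd (⊤ : SimpleGraph (Fin n)) H) = copies n (gstar H) := by
  ext ⟨i, u⟩ ⟨j, v⟩
  change (i, u) ≠ (j, v) ∧ (2 ≤ _ ∨ _) ↔ i = j ∧ u ≠ v ∧ (2 ≤ H.edist u v ∨ TrueTwins H u v)
  by_cases hij : i = j
  · subst hij
    simp [two_le_edist_iff, lexProd_top_adj, trueTwins_lexProd_top_iff]
  · have := not_trueTwins_lexProd_top hH (p := (i, u)) (q := (j, v)) hij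
    simp_all [two_le_edist_iff, lexProd_top_adj]

end LexProdTop

section JoinK1

variable {H : SimpleGraph β}

@[simp]
lemma joinK1_adj_inr_inr {u v : β} : (joinK1 H).Adj (.inr u) (.inr v) ↔ H.Adj u v :=
  .rfl

lemma ediam_joinK1_le_two : (joinK1 H).ediam ≤ 2 := by
  have hapex (x : Unit ⊕ β) : (joinK1 H).edist x (.inl ()) ≤ 1 := by
    rw [edist_le_one_iff_adj_or_eq]
    rcases x with ⟨⟩ | v
    exacts [.inr rfl, .inl trivial]
  refine ediam_le_iff.mpr fun x y => ?_
  calc (joinK1 H).edist x y ≤ (joinK1 H).edist x (.inl ()) + (joinK1 H).edist (.inl ()) y :=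
        SimpleGraph.edist_triangle
    _ ≤ 1 + 1 := add_le_add (hapex x) (SimpleGraph.edist_comm ▸ hapex y)
    _ = 2 := one_add_one_eq_two

lemma gstar_joinK1_adj_inr {u v : β} :
    (gstar (joinK1 H)).Adj (.inr u) (.inr v) ↔ (gstar H).Adj u v := by
  have htwins : TrueTwins (joinK1 H) (.inr u) (.inr v) ↔ TrueTwins H u v := by
    refine ⟨fun h w => by simpa using h (.inr w), fun h x => ?_⟩
    rcases x with ⟨⟩ | w
    exacts [iff_of_true (.inl trivial) (.inl trivial), by simpa using h w]
  change _ ∧ (2 ≤ _ ∨ _) ↔ u ≠ v ∧ (2 ≤ H.edist u v ∨ TrueTwins H u v)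
  rw [two_le_edist_iff, two_le_edist_iff, htwins]
  simp only [ne_eq, Sum.inr.injEq]
  rfl

lemma not_gstar_joinK1_adj_inl (hH : ∀ v, ∃ w, Hᶜ.Adj v w) (y : Unit ⊕ β) :
    ¬ (gstar (joinK1 H)).Adj (.inl ()) y := by
  rintro ⟨hne, hfar | htwins⟩ <;> rcases y with ⟨⟩ | v
  · exact hne rfl
  · exact (two_le_edist_iff.mp hfar).2 trivial
  · exact hne rfl
  · obtain ⟨w, hvw, hnadj⟩ := hH v
    rcases (htwins (.inr w)).mp (.inl trivial) with hadj | heq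
    exacts [hnadj hadj, hvw (Sum.inr_injective heq)]

def gstarJoinK1Embedding : gstar H ↪g gstar (joinK1 H) where
  toFun := Sum.inr
  inj' := Sum.inr_injective
  map_rel_iff' := gstar_joinK1_adj_inr

lemma vcNum_gstar_joinK1 [Fintype β] (hH : ∀ v, ∃ w, Hᶜ.Adj v w) :
    vcNum (gstar (joinK1 H)) = vcNum (gstar H) :=
  vcNum_eq_of_adj_mem_range gstarJoinK1Embedding fun x y hxy => by
    rcases x with ⟨⟩ | u
    exacts [absurd hxy (not_gstar_joinK1_adj_inl hH y), ⟨u, rfl⟩]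

end JoinK1

theorem stmt_18 [Fintype β] (n : ℕ) (hn : 2 ≤ n) (H : SimpleGraph β)
    [DecidableRel H.Adj] (hn' : 2 ≤ Fintype.card β)
    (hdeg : ∀ v, H.degree v ≤ Fintype.card β - 2) :
    Nonempty (srGraph (lexProd (⊤ : SimpleGraph (Fin n)) H) ≃g copies n (gstar H)) ∧
    (H.ediam = 2 → sdim (lexProd (⊤ : SimpleGraph (Fin n)) H) = n * sdim H) ∧
    (2 < H.ediam → sdim (lexProd (⊤ : SimpleGraph (Fin n)) H) = n * sdim (joinK1 H)) := by
  have : Nontrivial (Fin n) := Fin.nontrivial_iff_two_le.mpr hn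
  have : Nonempty β := Fintype.card_pos_iff.mp (by omega)
  have hH := exists_compl_adj_of_degree_le hn' hdeg
  have hlex : (lexProd (⊤ : SimpleGraph (Fin n)) H).ediam ≤ 2 := ediam_lexProd_top_le_two
  have hsdim : sdim (lexProd (⊤ : SimpleGraph (Fin n)) H) = n * vcNum (gstar H) := by
    rw [sdim_eq_vcNum_gstar hlex, gstar_lexProd_top hH, vcNum_copies]
  refine ⟨⟨gstar_lexProd_top hH ▸ srGraphIsoGstar hlex (exists_compl_adj_lexProd_top hH)⟩,
    fun hdiam => ?_, fun _ => ?_⟩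
  · rw [hsdim, sdim_eq_vcNum_gstar hdiam.le]
  · rw [hsdim, sdim_eq_vcNum_gstar ediam_joinK1_le_two, vcNum_gstar_joinK1 hH]

end Paper
end
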